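/- In R₂, the element u = s + t is transcendental over ℤ: no nonzero integer polynomial without constant term vanishes at s + t. -/

import Mathlib

/-!
The tree-indexed vector space `V` over `ℚ` with basis the free monoid on two letters
(encoded as `List Bool`, with `false` the letter `0` and `true` the letter `1`).
The recursive matrices `s = [[0,0],[1,0]]` and `t = [[0,t],[0,s]]` of the ring `R₂`
act on the decomposition `V = ℚ·φ ⊕ 0V ⊕ 1V` by the block-matrix recursion.
-/

noncomputable section

abbrev V : Type := List Bool →₀ ℚ

/-- Prefixing by a letter: the embedding `V → yV`. -/
def pre (b : Bool) : V →ₗ[ℚ] V := Finsupp.lmapDomain ℚ ℚ (List.cons b)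

/-- Value of `s = [[0,0],[1,0]]` on a basis word. -/
def Sfun : List Bool → V
  | [] => 0
  | false :: u => Finsupp.single (true :: u) 1
  | true :: _ => 0

/-- Value of `t = [[0,t],[0,s]]` on a basis word, by recursion. -/
def Tfun : List Bool → V
  | [] => 0
  | false :: _ => 0
  | true :: u => pre false (Tfun u) + pre true (Sfun u)

/-- The generator `s` of `R₂`. -/
def sR : Module.End ℚ V := Finsupp.linearCombination ℚ Sfun

/-- The generator `t` of `R₂`. -/
def tR : Module.End ℚ V := Finsupp.linearCombination ℚ Tfun

/-- The level-preserving operator with block form `[[e,0,0],[0,A,B],[0,C,D]]` on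
`V = ℚ·φ ⊕ 0V ⊕ 1V`, written `e ⊕ [[A,B],[C,D]]`. -/
def blk (e : ℚ) (A B C D : Module.End ℚ V) : Module.End ℚ V :=
  Finsupp.linearCombination ℚ (fun w => match w with
    | [] => Finsupp.single ([] : List Bool) e
    | false :: u => pre false (A (Finsupp.single u 1)) + pre true (C (Finsupp.single u 1))
    | true :: u => pre false (B (Finsupp.single u 1)) + pre true (D (Finsupp.single u 1)))

/-- The monomial in `s, t` given by a word (`false ↦ s`, `true ↦ t`). -/
def mono (w : List Bool) : Module.End ℚ V :=
  (w.map (fun b => if b then tR else sR)).prod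

/-- The ring `R₂` generated by `s` and `t` (a non-unital subring of `End ℚ V`). -/
def R2 : NonUnitalSubring (Module.End ℚ V) := NonUnitalSubring.closure {sR, tR}

end

/-!
`s + t` sends every basis vector `e_w` of `V` to a basis vector of the same length or to `0`, and
only the words `1⋯1` are sent to `0`. Along the way the binary value `binVal` of the word strictly
increases while `binVal + 2` at most doubles. Hence the orbit of `e_{0ⁿ⁺¹}` survives `n` steps and
meets its `n`-th point `e_w'` only once, so the `w'`-coordinate of `p(s + t) e_{0ⁿ⁺¹}` is the
`n`-th coefficient of `p`.
-/

open Polynomial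

theorem apply_aeval_apply_eq_coeff {K M : Type*} [CommSemiring K] [AddCommMonoid M]
    [Module K M] (f : Module.End K M) (v : M) (φ : M →ₗ[K] K) (n : ℕ)
    (h : ∀ i, φ ((f ^ i) v) = if i = n then 1 else 0) (p : K[X]) :
    φ (aeval f p v) = p.coeff n := by
  rw [aeval_eq_sum_range' (Nat.lt_add_of_pos_right (Nat.succ_pos n))]
  simp [h, Finset.mem_range.mpr (Nat.lt_add_left _ (Nat.lt_succ_self n))]

noncomputable section

/-- `tWord w = some w'` encodes `t e_w = e_w'`, and `tWord w = none` encodes `t e_w = 0`. -/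
def tWord : List Bool → Option (List Bool)
  | true :: false :: u => some (true :: true :: u)
  | true :: true :: u => (tWord (true :: u)).map (List.cons false)
  | _ => none

def uWord : List Bool → Option (List Bool)
  | false :: u => some (true :: u)
  | w => tWord w

def uOrbit : ℕ → List Bool → Option (List Bool)
  | 0, w => some w
  | n + 1, w => (uOrbit n w).bind uWord

/-- Least significant digit first. -/
def binVal : List Bool → ℕ
  | [] => 0
  | b :: u => b.toNat + 2 * binVal u

def singleOrZero (o : Option (List Bool)) : V :=
  o.elim 0 fun w => Finsupp.single w 1

lemma pre_single (b : Bool) (u : List Bool) :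
    pre b (Finsupp.single u 1) = Finsupp.single (b :: u) 1 := by
  simp [pre, Finsupp.mapDomain_single]

lemma Tfun_eq_singleOrZero (w : List Bool) : Tfun w = singleOrZero (tWord w) := by
  fun_induction tWord w with
  | case1 u => simp [Tfun, Sfun, pre_single, singleOrZero]
  | case2 u ih =>
    rw [Tfun, ih]
    cases tWord (true :: u) <;> simp [Sfun, pre_single, singleOrZero]
  | case3 w h1 h2 =>
    match w, h1, h2 with
    | [], _, _ => rfl
    | false :: _, _, _ => rfl
    | [true], _, _ => simp [Tfun, Sfun, singleOrZero]
    | true :: false :: u, h, _ => exact absurd rfl (h u)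
    | true :: true :: u, _, h => exact absurd rfl (h u)

lemma sR_add_tR_single (w : List Bool) :
    (sR + tR) (Finsupp.single w 1) = singleOrZero (uWord w) := by
  have hS : ∀ w, sR (Finsupp.single w 1) = Sfun w := by simp [sR]
  have hT : ∀ w, tR (Finsupp.single w 1) = Tfun w := by simp [tR]
  rw [LinearMap.add_apply, hS, hT, Tfun_eq_singleOrZero]
  match w with
  | [] => simp [Sfun, tWord, uWord, singleOrZero]
  | false :: u => simp [Sfun, tWord, uWord, singleOrZero]
  | true :: u => simp [Sfun, uWord]

lemma sR_add_tR_pow_single (n : ℕ) (w : List Bool) :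
    ((sR + tR) ^ n) (Finsupp.single w 1) = singleOrZero (uOrbit n w) := by
  induction n with
  | zero => rfl
  | succ n ih =>
    rw [pow_succ', Module.End.mul_apply, ih, uOrbit]
    cases uOrbit n w with
    | none => simp [singleOrZero]
    | some x => exact sR_add_tR_single x

lemma length_binVal_of_tWord_eq_some {w w' : List Bool} (h : tWord w = some w') :
    w'.length = w.length ∧ binVal w < binVal w' ∧ binVal w' + 2 ≤ 2 * (binVal w + 2) := by
  fun_induction tWord w generalizing w' with
  | case1 u =>
    cases h
    simp [binVal]
    omega
  | case2 u ih =>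
    obtain ⟨x, hx, rfl⟩ := Option.map_eq_some_iff.mp h
    obtain ⟨h1, h2, h3⟩ := ih hx
    simp only [binVal, List.length_cons, Bool.toNat_true, Bool.toNat_false] at *
    omega
  | case3 => simp at h

lemma length_binVal_of_uWord_eq_some {w w' : List Bool} (h : uWord w = some w') :
    w'.length = w.length ∧ binVal w < binVal w' ∧ binVal w' + 2 ≤ 2 * (binVal w + 2) := by
  match w, h with
  | false :: u, h =>
    cases h
    simp [binVal]
    omega
  | [], h => exact length_binVal_of_tWord_eq_some h
  | true :: u, h => exact length_binVal_of_tWord_eq_some h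

lemma binVal_of_tWord_eq_none {u : List Bool} (h : tWord (true :: u) = none) :
    binVal (true :: u) + 1 = 2 ^ (u.length + 1) := by
  induction u with
  | nil => rfl
  | cons b u ih =>
    cases b with
    | false => simp [tWord] at h
    | true =>
      have := ih (Option.map_eq_none_iff.mp h)
      simp only [binVal, List.length_cons, Bool.toNat_true] at this ⊢
      rw [pow_succ]
      omega

lemma binVal_of_uWord_eq_none {w : List Bool} (h : uWord w = none) :
    binVal w + 1 = 2 ^ w.length := by
  match w, h with
  | [], _ => rfl
  | true :: u, h => exact binVal_of_tWord_eq_none h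

lemma binVal_lt_of_uOrbit {w a b : List Bool} {i j : ℕ} (hij : i < j)
    (ha : uOrbit i w = some a) (hb : uOrbit j w = some b) : binVal a < binVal b := by
  induction j generalizing b with
  | zero => omega
  | succ j ih =>
    obtain ⟨c, hc, hcb⟩ := Option.bind_eq_some_iff.mp hb
    have hlt := (length_binVal_of_uWord_eq_some hcb).2.1
    rcases Nat.lt_succ_iff_lt_or_eq.mp hij with hij | rfl
    · exact (ih hij hc).trans hlt
    · obtain rfl := Option.some_inj.mp (ha.symm.trans hc)
      exact hlt

lemma eq_of_uOrbit_eq_some {w a : List Bool} {i j : ℕ}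
    (hi : uOrbit i w = some a) (hj : uOrbit j w = some a) : i = j := by
  by_contra hne
  rcases Nat.lt_or_gt_of_ne hne with h | h
  · exact (binVal_lt_of_uOrbit h hi hj).ne rfl
  · exact (binVal_lt_of_uOrbit h hj hi).ne rfl

lemma binVal_replicate_false (N : ℕ) : binVal (List.replicate N false) = 0 := by
  induction N with
  | zero => rfl
  | succ N ih => simp [List.replicate_succ, binVal, ih]

lemma uOrbit_replicate_false {n N : ℕ} (hn : n < N) :
    ∃ w, uOrbit n (List.replicate N false) = some w ∧
      w.length = N ∧ binVal w + 2 ≤ 2 ^ (n + 1) := by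
  induction n with
  | zero =>
    refine ⟨_, rfl, List.length_replicate, ?_⟩
    rw [binVal_replicate_false]
    omega
  | succ n ih =>
    obtain ⟨w, hw, hlen, hval⟩ := ih (by omega)
    have hpow : 2 ^ (n + 2) ≤ 2 ^ N := Nat.pow_le_pow_right two_pos hn
    rcases h : uWord w with _ | w'
    · have := binVal_of_uWord_eq_none h
      rw [hlen] at this
      rw [pow_succ] at hpow
      omega
    · obtain ⟨hlen', -, hval'⟩ := length_binVal_of_uWord_eq_some h
      refine ⟨w', by rw [uOrbit, hw]; exact h, hlen'.trans hlen, ?_⟩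
      rw [pow_succ]
      omega

/-- Witnessed by `w = 0ⁿ⁺¹` and the `n`-th point `w'` of its `uOrbit`. -/
lemma exists_sR_add_tR_pow_single_apply (n : ℕ) : ∃ w w' : List Bool,
    ∀ i, ((sR + tR) ^ i) (Finsupp.single w 1) w' = if i = n then 1 else 0 := by
  obtain ⟨w', hw', -⟩ := uOrbit_replicate_false (Nat.lt_succ_self n)
  refine ⟨List.replicate (n + 1) false, w', fun i => ?_⟩
  rw [sR_add_tR_pow_single]
  by_cases hin : i = n
  · simp [hin, hw', singleOrZero]
  rcases hi : uOrbit i (List.replicate (n + 1) false) with _ | a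
  · simp [hin, singleOrZero]
  · have ha : a ≠ w' := by
      rintro rfl
      exact hin (eq_of_uOrbit_eq_some hi hw')
    simp [hin, ha, singleOrZero]

theorem s_add_t_transcendental_general (p : Polynomial ℤ)
    (hp : Polynomial.aeval (sR + tR) p = 0) : p = 0 := by
  ext n
  obtain ⟨w, w', hw⟩ := exists_sR_add_tR_pow_single_apply n
  have hcoeff := apply_aeval_apply_eq_coeff (sR + tR) (Finsupp.single w 1) (Finsupp.lapply w') n hw
    (p.map (Int.castRingHom ℚ))
  rw [← algebraMap_int_eq, aeval_map_algebraMap, hp] at hcoeff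
  simpa using hcoeff.symm

/-- In `R₂` the element `u = s + t` is transcendental over `ℤ`: no nonzero integer
polynomial without constant term vanishes at `s + t`. -/
theorem s_add_t_transcendental (p : Polynomial ℤ) (h0 : p.coeff 0 = 0)
    (hp : Polynomial.aeval (sR + tR) p = 0) : p = 0 :=
  s_add_t_transcendental_general p hp

end
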